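/- arXiv:1306.0265 — 3 statements merged into one kernel-verified Lean document; each statement's English description precedes it below -/
import Mathlib

section
/- The Jacobi–Anger expansion holds: for all real z and φ, exp(i z cos φ) = J₀(z) + 2 Σ_{n=1}^{∞} iⁿ Jₙ(z) cos(nφ), where the series converges. -/
open Real MeasureTheory

noncomputable def besselJ (n : ℕ) (x : ℝ) : ℝ :=
  ∑' m : ℕ, (-1 : ℝ)^m / (m.factorial * (m+n).factorial) * (x/2)^(2*m+n)

/-!
With `c = i z / 2`, the Cauchy product of `exp (c t)` and `exp (c / t)` regrouped by the power of
`t` gives the Laurent expansion `exp (c (t + t⁻¹)) = ∑_{n ∈ ℤ} tⁿ i^|n| J_|n|(z)`: the terms with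
`t`-exponent `n ≥ 0` are `c^(2k+n) tⁿ / (k! (k+n)!)`, which sum to `tⁿ iⁿ Jₙ(z)`. Putting
`t = e^{iφ}` and pairing `n` with `-n` turns `tⁿ + t⁻ⁿ` into `2 cos (nφ)`.
-/

open Complex

section

-- Scoped, since `Nat` notation would also turn the `φ` of the main theorem into the totient.
open scoped Nat

lemma summable_besselJ_series (n : ℕ) (x : ℝ) :
    Summable fun m : ℕ => (-1 : ℝ) ^ m / (m ! * (m + n) !) * (x / 2) ^ (2 * m + n) := by
  refine .of_norm_bounded ((Real.summable_pow_div_factorial ((x / 2) ^ 2)).mul_left (|x / 2| ^ n))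
    fun m => ?_
  have hfac : (1 : ℝ) ≤ (m + n) ! := mod_cast (m + n).factorial_pos
  rw [norm_mul, norm_div, norm_pow, norm_neg, norm_one, one_pow, Real.norm_eq_abs,
    Real.norm_eq_abs, abs_of_pos (by positivity), pow_add, pow_mul, abs_mul, abs_pow, abs_pow,
    abs_pow, sq_abs]
  calc 1 / (m ! * (m + n) ! : ℝ) * (((x / 2) ^ 2) ^ m * |x / 2| ^ n)
      ≤ 1 / (m ! * 1 : ℝ) * (((x / 2) ^ 2) ^ m * |x / 2| ^ n) := by gcongr
    _ = |x / 2| ^ n * (((x / 2) ^ 2) ^ m / m !) := by ring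

lemma hasSum_I_pow_mul_besselJ (n : ℕ) (z : ℝ) :
    HasSum (fun k : ℕ => (I * z / 2) ^ (2 * k + n) / (k ! * (k + n) !)) (I ^ n * besselJ n z) := by
  refine ((hasSum_ofReal.mpr (summable_besselJ_series n z).hasSum).mul_left (I ^ n)).congr_fun
    fun k => ?_
  rw [mul_div_assoc, mul_pow, pow_add I, pow_mul, I_sq]
  push_cast
  ring

def Int.prodNatEquivNatProd : ℤ × ℕ ≃ ℕ × ℕ where
  toFun p := (p.2 + p.1.toNat, p.2 + (-p.1).toNat)
  invFun q := ((q.1 : ℤ) - q.2, min q.1 q.2)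
  left_inv p := by ext <;> simp; omega
  right_inv q := by ext <;> simp <;> omega

lemma HasSum.int_of_prod_nat {M : Type*} [AddCommMonoid M] [TopologicalSpace M] [ContinuousAdd M]
    [T3Space M] {f : ℕ × ℕ → M} {g : ℤ → M} {s : M} (hf : HasSum f s)
    (hg : ∀ n : ℤ, HasSum (fun k => f (k + n.toNat, k + (-n).toNat)) (g n)) : HasSum g s :=
  (Int.prodNatEquivNatProd.hasSum_iff.mpr hf).prod_fiberwise hg

lemma hasSum_exp_mul_exp (a b : ℂ) :
    HasSum (fun p : ℕ × ℕ => a ^ p.1 / p.1 ! * (b ^ p.2 / p.2 !)) (cexp (a + b)) := by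
  have hexp (w : ℂ) : HasSum (fun j : ℕ => w ^ j / j !) (cexp w) := by
    rw [exp_eq_exp_ℂ]; exact NormedSpace.expSeries_div_hasSum_exp w
  have hnorm (w : ℂ) : Summable fun j : ℕ => ‖w ^ j / (j ! : ℂ)‖ :=
    (Real.summable_pow_div_factorial ‖w‖).congr fun j => by simp
  have hs : Summable fun p : ℕ × ℕ => a ^ p.1 / p.1 ! * (b ^ p.2 / p.2 !) :=
    ((hnorm a).mul_norm (hnorm b)).of_norm
  rw [Complex.exp_add]
  exact HasSum.mul (f := fun j : ℕ => a ^ j / j !) (g := fun j : ℕ => b ^ j / j !)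
    (hexp a) (hexp b) hs

lemma hasSum_besselJ_diagonal (z : ℝ) {t : ℂ} (ht : t ≠ 0) (m : ℕ) :
    HasSum (fun k : ℕ => (I * z / 2 * t) ^ (k + m) / (k + m) ! * ((I * z / 2 * t⁻¹) ^ k / k !))
      (t ^ m * (I ^ m * besselJ m z)) := by
  refine ((hasSum_I_pow_mul_besselJ m z).mul_left (t ^ m)).congr_fun fun k => ?_
  have htk : t ^ k * (t ^ k)⁻¹ = 1 := mul_inv_cancel₀ (pow_ne_zero k ht)
  calc (I * z / 2 * t) ^ (k + m) / (k + m) ! * ((I * z / 2 * t⁻¹) ^ k / k !)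
      = t ^ m * ((I * z / 2) ^ (2 * k + m) / (k ! * (k + m) !)) * (t ^ k * (t ^ k)⁻¹) := by ring
    _ = _ := by rw [htk, mul_one]

theorem hasSum_zpow_mul_besselJ (z : ℝ) {t : ℂ} (ht : t ≠ 0) :
    HasSum (fun n : ℤ => t ^ n * (I ^ n.natAbs * besselJ n.natAbs z))
      (cexp (I * z / 2 * (t + t⁻¹))) := by
  rw [mul_add]
  refine (hasSum_exp_mul_exp _ _).int_of_prod_nat fun n => ?_
  obtain ⟨m, rfl | rfl⟩ := Int.eq_nat_or_neg n
  · simpa using hasSum_besselJ_diagonal z ht m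
  · simpa [mul_comm] using hasSum_besselJ_diagonal z (inv_ne_zero ht) m

lemma HasSum.nat_add_one_add_neg {G : Type*} [AddCommGroup G] [TopologicalSpace G]
    [IsTopologicalAddGroup G] {f : ℤ → G} {s : G} (hf : HasSum f s) :
    HasSum (fun n : ℕ => f (n + 1) + f (-(n + 1))) (s - f 0) := by
  have := (hasSum_nat_add_iff' 1).mpr hf.nat_add_neg
  rw [Finset.sum_range_one, Nat.cast_zero, neg_zero, show s + f 0 - (f 0 + f 0) = s - f 0 by abel]
    at this
  exact_mod_cast this

lemma cexp_I_mul_zpow_add_zpow_neg (x : ℝ) (k : ℤ) :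
    cexp (I * x) ^ k + cexp (I * x) ^ (-k) = 2 * Real.cos (k * x) := by
  rw [← exp_int_mul, ← exp_int_mul, ofReal_cos, two_cos]
  push_cast
  ring_nf

end

/-- Jacobi–Anger expansion. -/
theorem stmt2 (z φ : ℝ) :
    HasSum (fun n : ℕ => Complex.I^(n+1) * (besselJ (n+1) z : ℂ) * ((Real.cos ((n+1) * φ) : ℝ) : ℂ))
      ((Complex.exp (Complex.I * z * Real.cos φ) - (besselJ 0 z : ℂ)) / 2) := by
  have hexp : I * z / 2 * (cexp (I * φ) + (cexp (I * φ))⁻¹) = I * z * Real.cos φ := by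
    have h1 := cexp_I_mul_zpow_add_zpow_neg φ 1
    rw [zpow_one, zpow_neg_one, Int.cast_one, one_mul] at h1
    rw [h1]
    ring
  have h := (hasSum_zpow_mul_besselJ z (exp_ne_zero (I * φ))).nat_add_one_add_neg.div_const 2
  simp only [hexp, zpow_zero, Int.natAbs_zero, pow_zero, one_mul] at h
  refine h.congr_fun fun n => ?_
  have hk : (n : ℤ) + 1 = ((n + 1 : ℕ) : ℤ) := by push_cast; rfl
  rw [hk, Int.natAbs_neg, Int.natAbs_natCast, ← add_mul, cexp_I_mul_zpow_add_zpow_neg]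
  push_cast
  ring
end

section
/- For real a > 0 and b > 0, the integral ∫₀^∞ x e^{−ax} J₀(bx) dx equals a/(a² + b²)^{3/2}. -/
open Real MeasureTheory

/-! Bessel's integral `π J₀(y) = ∫₀^π cos (y sin θ) dθ` (integrate the cosine series termwise
against Wallis' integrals) turns the left side into an absolutely convergent double integral.
After Fubini, the inner integral is the real part of `∫₀^∞ x e^{-wx} dx = 1/w²` at
`w = a + i b sin θ`, namely `(a² - b² sin² θ)/(a² + b² sin² θ)²`, and the outer one is elementary:
up to an exact derivative vanishing at `0` and `π`, the integrand is a multiple of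
`1/(a² + b² sin² θ)`, whose integral over `[0, π]` is `π/(a √(a² + b²))`. -/

open Filter Topology Set

open Nat in
theorem integral_sin_pow_two_mul (m : ℕ) :
    ∫ θ in 0..π, sin θ ^ (2 * m) = π * (2 * m)! / (4 ^ m * (m ! : ℝ) ^ 2) := by
  rw [integral_sin_pow_even, mul_div_assoc]
  congr 1
  induction m with
  | zero => simp
  | succ k ih =>
    rw [Finset.prod_range_succ, ih, show 2 * (k + 1) = 2 * k + 1 + 1 by ring]
    push_cast [factorial_succ]
    field_simp
    ring

open Nat in
theorem pi_mul_besselJ_zero (y : ℝ) :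
    π * besselJ 0 y = ∫ θ in 0..π, cos (y * sin θ) := by
  have hterm (m : ℕ) : ∫ θ in 0..π, (-1) ^ m * (y * sin θ) ^ (2 * m) / (2 * m)! =
      π * ((-1) ^ m / (m ! * (m + 0)!) * (y / 2) ^ (2 * m + 0)) := by
    simp_rw [mul_pow, mul_div_right_comm, intervalIntegral.integral_const_mul,
      integral_sin_pow_two_mul, div_pow, pow_mul]
    field_simp
    norm_num [pow_mul]
    ring
  have hseries : HasSum (fun m : ℕ => ∫ θ in 0..π, (-1) ^ m * (y * sin θ) ^ (2 * m) / (2 * m)!)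
      (∫ θ in 0..π, cos (y * sin θ)) := by
    refine intervalIntegral.hasSum_integral_of_dominated_convergence
      (fun m _ => |y| ^ (2 * m) / (2 * m)!) (fun m => by fun_prop) (fun m => ?_) ?_
      intervalIntegrable_const (ae_of_all _ fun θ _ => hasSum_cos _)
    · refine ae_of_all _ fun θ _ => ?_
      rw [norm_div, norm_mul, norm_pow, norm_pow, norm_neg, norm_one, one_pow, one_mul,
        Real.norm_natCast, norm_mul, Real.norm_eq_abs, Real.norm_eq_abs]
      gcongr
      exact mul_le_of_le_one_right (abs_nonneg y) (abs_sin_le_one θ)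
    · exact ae_of_all _ fun θ _ =>
        (summable_pow_div_factorial |y|).comp_injective (mul_right_injective₀ two_ne_zero)
  rw [← hseries.tsum_eq, besselJ, ← tsum_mul_left]
  exact tsum_congr fun m => (hterm m).symm

theorem mul_cos_sq_add_mul_sin_sq_pos {p q : ℝ} (hp : 0 < p) (hq : 0 < q) (θ : ℝ) :
    0 < p * cos θ ^ 2 + q * sin θ ^ 2 := by
  by_cases hcos : cos θ = 0
  · simp [hcos, hq, sin_sq]
  · positivity

-- A branch of `θ ↦ arctan ((c / a) * tan θ)` that is continuous on all of `ℝ`, from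
-- `arctan (k tan θ) - θ = arctan ((k - 1) tan θ / (1 + k tan² θ))` with `k = c / a`.
theorem hasDerivAt_add_arctan_sin_mul_cos {a c : ℝ} (ha : 0 < a) (hc : 0 < c) (θ : ℝ) :
    HasDerivAt (fun θ => θ + arctan ((c - a) * sin θ * cos θ / (a * cos θ ^ 2 + c * sin θ ^ 2)))
      (a * c / (a ^ 2 * cos θ ^ 2 + c ^ 2 * sin θ ^ 2)) θ := by
  have hD := mul_cos_sq_add_mul_sin_sq_pos ha hc θ
  have hE := mul_cos_sq_add_mul_sin_sq_pos (pow_pos ha 2) (pow_pos hc 2) θ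
  have hq := ((((hasDerivAt_sin θ).const_mul (c - a)).mul (hasDerivAt_cos θ)).div
    (((hasDerivAt_cos θ).pow 2).const_mul a |>.add (((hasDerivAt_sin θ).pow 2).const_mul c))
    hD.ne')
  refine ((hasDerivAt_id θ).add ((hasDerivAt_arctan _).comp θ hq)).congr_deriv ?_
  simp only [Pi.mul_apply, Pi.div_apply, Pi.add_apply, Pi.pow_apply]
  field_simp
  norm_num
  linear_combination (a * c * (a ^ 2 * cos θ ^ 2 + c ^ 2 * sin θ ^ 2) * (sin θ ^ 2 + cos θ ^ 2)) *
    sin_sq_add_cos_sq θ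

theorem integral_one_div_sq_mul_cos_sq_add_sq_mul_sin_sq {a c : ℝ} (ha : 0 < a) (hc : 0 < c) :
    ∫ θ in 0..π, 1 / (a ^ 2 * cos θ ^ 2 + c ^ 2 * sin θ ^ 2) = π / (a * c) := by
  have hcont : Continuous fun θ => a * c / (a ^ 2 * cos θ ^ 2 + c ^ 2 * sin θ ^ 2) :=
    continuous_const.div (by fun_prop) fun θ =>
      (mul_cos_sq_add_mul_sin_sq_pos (pow_pos ha 2) (pow_pos hc 2) θ).ne'
  have hFTC := intervalIntegral.integral_eq_sub_of_hasDerivAt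
    (fun θ _ => hasDerivAt_add_arctan_sin_mul_cos ha hc θ) (hcont.intervalIntegrable 0 π)
  simp only [sin_pi, sin_zero, mul_zero, zero_mul, zero_div, arctan_zero, add_zero, sub_zero]
    at hFTC
  have hac : a * c ≠ 0 := (mul_pos ha hc).ne'
  calc ∫ θ in 0..π, 1 / (a ^ 2 * cos θ ^ 2 + c ^ 2 * sin θ ^ 2)
      = (a * c)⁻¹ * ∫ θ in 0..π, a * c / (a ^ 2 * cos θ ^ 2 + c ^ 2 * sin θ ^ 2) := by
        rw [← intervalIntegral.integral_const_mul]
        congr 1 with θ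
        field_simp
    _ = π / (a * c) := by rw [hFTC, inv_mul_eq_div]

theorem integral_one_div_sq_add_sq_mul_sin_sq {a : ℝ} (ha : 0 < a) (b : ℝ) :
    ∫ θ in 0..π, 1 / (a ^ 2 + b ^ 2 * sin θ ^ 2) = π / (a * √(a ^ 2 + b ^ 2)) := by
  have hc : 0 < √(a ^ 2 + b ^ 2) := sqrt_pos.mpr (by positivity)
  rw [← integral_one_div_sq_mul_cos_sq_add_sq_mul_sin_sq ha hc]
  congr 1 with θ
  rw [sq_sqrt (by positivity), cos_sq']
  ring

theorem hasDerivAt_sin_mul_cos_div {a : ℝ} (ha : a ≠ 0) (b θ : ℝ) :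
    HasDerivAt (fun θ => sin θ * cos θ / (a ^ 2 + b ^ 2 * sin θ ^ 2))
      ((a ^ 2 - (2 * a ^ 2 + b ^ 2) * sin θ ^ 2) / (a ^ 2 + b ^ 2 * sin θ ^ 2) ^ 2) θ := by
  have hD : a ^ 2 + b ^ 2 * sin θ ^ 2 ≠ 0 := by positivity
  refine (((hasDerivAt_sin θ).mul (hasDerivAt_cos θ)).div
    (((hasDerivAt_sin θ).pow 2).const_mul (b ^ 2) |>.const_add (a ^ 2)) hD).congr_deriv ?_
  simp only [Pi.mul_apply, Pi.pow_apply]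
  field_simp
  linear_combination (a ^ 2 - b ^ 2 * sin θ ^ 2) * sin_sq_add_cos_sq θ

theorem integral_sq_sub_div_sq_add_sq_mul_sin_sq {a : ℝ} (ha : 0 < a) (b : ℝ) :
    ∫ θ in 0..π, (a ^ 2 - b ^ 2 * sin θ ^ 2) / (a ^ 2 + b ^ 2 * sin θ ^ 2) ^ 2
      = π * a / √(a ^ 2 + b ^ 2) ^ 3 := by
  have hD (θ : ℝ) : a ^ 2 + b ^ 2 * sin θ ^ 2 ≠ 0 := by positivity
  have hc : 0 < √(a ^ 2 + b ^ 2) := sqrt_pos.mpr (by positivity)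
  have hc2 : √(a ^ 2 + b ^ 2) ^ 2 = a ^ 2 + b ^ 2 := sq_sqrt (by positivity)
  have hderiv_int : IntervalIntegrable (fun θ => (a ^ 2 - (2 * a ^ 2 + b ^ 2) * sin θ ^ 2) /
      (a ^ 2 + b ^ 2 * sin θ ^ 2) ^ 2) volume 0 π :=
    (Continuous.div (by fun_prop) (by fun_prop) fun θ => pow_ne_zero 2 (hD θ)).intervalIntegrable
      _ _
  have hinv_int : IntervalIntegrable (fun θ => 1 / (a ^ 2 + b ^ 2 * sin θ ^ 2)) volume 0 π :=
    (continuous_const.div (by fun_prop) hD).intervalIntegrable _ _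
  have hexact := intervalIntegral.integral_eq_sub_of_hasDerivAt
    (fun θ _ => hasDerivAt_sin_mul_cos_div ha.ne' b θ) hderiv_int
  simp only [sin_pi, sin_zero, zero_mul, zero_div, sub_zero] at hexact
  calc ∫ θ in 0..π, (a ^ 2 - b ^ 2 * sin θ ^ 2) / (a ^ 2 + b ^ 2 * sin θ ^ 2) ^ 2
      = ∫ θ in 0..π, (b ^ 2 / (a ^ 2 + b ^ 2) * ((a ^ 2 - (2 * a ^ 2 + b ^ 2) * sin θ ^ 2) /
          (a ^ 2 + b ^ 2 * sin θ ^ 2) ^ 2) +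
          a ^ 2 / (a ^ 2 + b ^ 2) * (1 / (a ^ 2 + b ^ 2 * sin θ ^ 2))) := by
        congr 1 with θ
        have := hD θ
        field_simp
        ring
    _ = a ^ 2 / (a ^ 2 + b ^ 2) * (π / (a * √(a ^ 2 + b ^ 2))) := by
        rw [intervalIntegral.integral_add (hderiv_int.const_mul _) (hinv_int.const_mul _),
          intervalIntegral.integral_const_mul, intervalIntegral.integral_const_mul, hexact,
          integral_one_div_sq_add_sq_mul_sin_sq ha, mul_zero, zero_add]
    _ = π * a / √(a ^ 2 + b ^ 2) ^ 3 := by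
        rw [pow_succ _ 2, hc2]
        field_simp

theorem integrableOn_mul_exp_neg_mul {r : ℝ} (hr : 0 < r) :
    IntegrableOn (fun x => x * exp (-r * x)) (Ioi 0) := by
  simpa using integrableOn_rpow_mul_exp_neg_mul_rpow (s := 1) (p := 1) (by norm_num) one_pos hr

theorem norm_cexp_neg_mul_ofReal (w : ℂ) (x : ℝ) : ‖Complex.exp (-(w * x))‖ = exp (-w.re * x) := by
  rw [Complex.norm_exp]; simp

theorem tendsto_pow_mul_cexp_neg_mul_atTop {w : ℂ} (hw : 0 < w.re) (n : ℕ) :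
    Tendsto (fun x : ℝ => (x : ℂ) ^ n * Complex.exp (-(w * x))) atTop (𝓝 0) := by
  rw [tendsto_zero_iff_norm_tendsto_zero]
  refine (tendsto_rpow_mul_exp_neg_mul_atTop_nhds_zero n w.re hw).congr' ?_
  filter_upwards [eventually_ge_atTop 0] with x hx
  rw [norm_mul, norm_pow, norm_cexp_neg_mul_ofReal, Complex.norm_real, Real.norm_of_nonneg hx,
    rpow_natCast, neg_mul]

theorem integrableOn_mul_cexp_neg_mul {w : ℂ} (hw : 0 < w.re) :
    IntegrableOn (fun x : ℝ => (x : ℂ) * Complex.exp (-(w * x))) (Ioi 0) := by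
  refine (integrableOn_mul_exp_neg_mul hw).mono' (by fun_prop) ?_
  filter_upwards [ae_restrict_mem measurableSet_Ioi] with x hx
  rw [norm_mul, norm_cexp_neg_mul_ofReal, Complex.norm_real, Real.norm_of_nonneg (le_of_lt hx)]

theorem integral_mul_cexp_neg_mul {w : ℂ} (hw : 0 < w.re) :
    ∫ x in Ioi (0 : ℝ), (x : ℂ) * Complex.exp (-(w * x)) = 1 / w ^ 2 := by
  have hw0 : w ≠ 0 := fun h => by simp [h] at hw
  set G : ℝ → ℂ := fun x => -((x : ℂ) * Complex.exp (-(w * x)) / w +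
    Complex.exp (-(w * x)) / w ^ 2)
  have hG (x : ℝ) : HasDerivAt G ((x : ℂ) * Complex.exp (-(w * x))) x := by
    have hexp : HasDerivAt (fun z : ℂ => Complex.exp (-(w * z))) (Complex.exp (-(w * x)) * -w) x :=
      by simpa using ((hasDerivAt_id (x : ℂ)).const_mul (-w)).cexp
    refine (((((hasDerivAt_id (x : ℂ)).mul hexp).div_const w).add
      (hexp.div_const (w ^ 2))).neg.congr_deriv ?_).comp_ofReal
    simp only [id]
    field_simp
    ring
  have hlim : Tendsto G atTop (𝓝 0) := by
    have h1 := tendsto_pow_mul_cexp_neg_mul_atTop hw 1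
    have h0 := tendsto_pow_mul_cexp_neg_mul_atTop hw 0
    simp only [pow_one, pow_zero, one_mul] at h1 h0
    simpa [G] using ((h1.div_const w).add (h0.div_const (w ^ 2))).neg
  rw [integral_Ioi_of_hasDerivAt_of_tendsto (hG 0).continuousAt.continuousWithinAt
    (fun x _ => hG x) (integrableOn_mul_cexp_neg_mul hw) hlim]
  simp [G]

theorem integral_mul_exp_neg_mul_cos {r : ℝ} (hr : 0 < r) (c : ℝ) :
    ∫ x in Ioi (0 : ℝ), x * exp (-r * x) * cos (c * x) = (r ^ 2 - c ^ 2) / (r ^ 2 + c ^ 2) ^ 2 := by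
  set w : ℂ := r + c * Complex.I
  have hw : 0 < w.re := by simpa [w] using hr
  have hre (x : ℝ) : ((x : ℂ) * Complex.exp (-(w * x))).re = x * exp (-r * x) * cos (c * x) := by
    rw [Complex.re_ofReal_mul, Complex.exp_re]
    simp [w, mul_assoc]
  calc ∫ x in Ioi (0 : ℝ), x * exp (-r * x) * cos (c * x)
      = (∫ x in Ioi (0 : ℝ), (x : ℂ) * Complex.exp (-(w * x))).re := by
        rw [← RCLike.re_eq_complex_re, ← integral_re (integrableOn_mul_cexp_neg_mul hw)]
        simp only [RCLike.re_eq_complex_re, hre]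
    _ = (r ^ 2 - c ^ 2) / (r ^ 2 + c ^ 2) ^ 2 := by
        rw [integral_mul_cexp_neg_mul hw, one_div, Complex.inv_re, Complex.normSq_apply]
        simp only [w, pow_two, Complex.mul_re, Complex.mul_im, Complex.add_re, Complex.add_im,
          Complex.ofReal_re, Complex.ofReal_im, Complex.I_re, Complex.I_im]
        ring

theorem integrable_prod_mul_exp_neg_mul_cos {a : ℝ} (ha : 0 < a) (b : ℝ) :
    Integrable (Function.uncurry fun x θ => x * exp (-a * x) * cos (b * x * sin θ))
      ((volume.restrict (Ioi 0)).prod (volume.restrict (Ioc 0 π))) := by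
  have hmajorant : Integrable (fun z : ℝ × ℝ => z.1 * exp (-a * z.1) * 1)
      ((volume.restrict (Ioi 0)).prod (volume.restrict (Ioc 0 π))) := by
    exact (integrableOn_mul_exp_neg_mul ha).mul_prod (integrableOn_const (by simp))
  refine hmajorant.mono' (by fun_prop) ?_
  rw [Measure.prod_restrict]
  filter_upwards [ae_restrict_mem (measurableSet_Ioi.prod measurableSet_Ioc)] with z hz
  have hx : 0 ≤ z.1 * exp (-a * z.1) := mul_nonneg (le_of_lt hz.1) (exp_pos _).le
  rw [Function.uncurry_def, norm_mul, Real.norm_of_nonneg hx]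
  exact mul_le_mul_of_nonneg_left (abs_cos_le_one _) hx

theorem stmt12_general (a b : ℝ) (ha : 0 < a) :
    IntegrableOn (fun x : ℝ => x * Real.exp (-a * x) * besselJ 0 (b * x)) (Set.Ioi 0) ∧
    ∫ x in Set.Ioi (0:ℝ), x * Real.exp (-a * x) * besselJ 0 (b * x)
      = a / (a^2 + b^2) ^ ((3:ℝ)/2) := by
  set g : ℝ → ℝ → ℝ := fun x θ => x * exp (-a * x) * cos (b * x * sin θ)
  have hg := integrable_prod_mul_exp_neg_mul_cos ha b
  have hrepr (x : ℝ) : x * exp (-a * x) * besselJ 0 (b * x) = π⁻¹ * ∫ θ in Ioc 0 π, g x θ := by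
    rw [integral_const_mul, ← intervalIntegral.integral_of_le pi_pos.le,
      ← pi_mul_besselJ_zero]
    field_simp
  have hinner (θ : ℝ) : ∫ x in Ioi 0, g x θ =
      (a ^ 2 - b ^ 2 * sin θ ^ 2) / (a ^ 2 + b ^ 2 * sin θ ^ 2) ^ 2 := by
    simp_rw [g, ← mul_pow, ← integral_mul_exp_neg_mul_cos ha, mul_right_comm b _ (sin θ)]
  refine ⟨(hg.integral_prod_left.const_mul π⁻¹).congr (ae_of_all _ fun x => (hrepr x).symm), ?_⟩
  rw [setIntegral_congr_fun measurableSet_Ioi fun x _ => hrepr x, integral_const_mul,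
    integral_integral_swap hg, setIntegral_congr_fun measurableSet_Ioc fun θ _ => hinner θ,
    ← intervalIntegral.integral_of_le pi_pos.le, integral_sq_sub_div_sq_add_sq_mul_sin_sq ha,
    rpow_div_two_eq_sqrt _ (by positivity)]
  field_simp
  norm_cast

theorem stmt12 (a b : ℝ) (ha : 0 < a) (hb : 0 < b) :
    IntegrableOn (fun x : ℝ => x * Real.exp (-a * x) * besselJ 0 (b * x)) (Set.Ioi 0) ∧
    ∫ x in Set.Ioi (0:ℝ), x * Real.exp (-a * x) * besselJ 0 (b * x)
      = a / (a^2 + b^2) ^ ((3:ℝ)/2) :=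
  stmt12_general a b ha
end

section
/- For real a > 0 and b > 0, the Laplace transform of J₀ satisfies ∫₀^∞ e^{−ax} J₀(bx) dx = 1/√(a² + b²). -/
/-!
Expanding `cos` in its Taylor series and integrating term by term against the Wallis integrals
gives Bessel's integral `J₀(t) = π⁻¹ ∫₀^π cos (t sin θ) dθ`; in particular `|J₀| ≤ 1`. The double
integral of `e^{-ax} cos (b x sin θ)` over `(0, ∞) × (0, π]` is dominated by `e^{-ax}`, so Fubini
swaps the integrations. The inner integral is the Laplace transform `a / (a² + b² sin² θ)` of a
cosine, and its integral over `[0, π]` is `π / √(a² + b²)`.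
-/

open Real MeasureTheory

open Set Nat

lemma integral_sin_pow_even_eq_factorial (n : ℕ) :
    ∫ θ in (0:ℝ)..π, sin θ ^ (2 * n) = π * (2 * n)! / (4 ^ n * (n !) ^ 2) := by
  rw [integral_sin_pow_even, mul_div_assoc]
  congr 1
  induction n with
  | zero => simp
  | succ k ih =>
    rw [Finset.prod_range_succ, ih, Nat.mul_succ, factorial_succ, factorial_succ, factorial_succ]
    push_cast
    field_simp
    ring

lemma besselJ_zero_eq_integral (t : ℝ) :
    besselJ 0 t = π⁻¹ * ∫ θ in (0:ℝ)..π, cos (t * sin θ) := by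
  have hsum := intervalIntegral.hasSum_integral_of_dominated_convergence (μ := volume)
    (a := 0) (b := π) (F := fun n θ => (-1) ^ n * (t * sin θ) ^ (2 * n) / (2 * n)!)
    (f := fun θ => cos (t * sin θ))
    (fun n _ => |t| ^ (2 * n) / (2 * n)!) (fun n => by fun_prop) ?_ ?_ intervalIntegrable_const
    (.of_forall fun θ _ => hasSum_cos _)
  · have hterm : ∀ n : ℕ, ∫ θ in (0:ℝ)..π, (-1) ^ n * (t * sin θ) ^ (2 * n) / (2 * n)!
        = π * ((-1 : ℝ) ^ n / (n ! * n !) * (t / 2) ^ (2 * n)) := by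
      intro n
      simp_rw [mul_pow, mul_div_right_comm, intervalIntegral.integral_const_mul,
        integral_sin_pow_even_eq_factorial, div_pow, pow_mul]
      field_simp
      ring
    simp_rw [hterm] at hsum
    rw [besselJ, (hsum.mul_left π⁻¹).tsum_eq.symm]
    simp [pi_ne_zero]
  · refine fun n => .of_forall fun θ _ => ?_
    rw [norm_div, norm_mul, norm_pow, norm_pow, norm_neg, norm_one, one_pow, one_mul,
      Real.norm_natCast]
    gcongr
    simpa [abs_mul] using mul_le_of_le_one_right (abs_nonneg t) (abs_sin_le_one θ)
  · exact .of_forall fun _ _ => (summable_pow_div_factorial |t|).comp_injective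
      (fun x y h => by simpa using h)

lemma integral_exp_neg_mul_mul_cos_Ioi {a : ℝ} (ha : 0 < a) (c : ℝ) :
    ∫ x in Ioi (0:ℝ), exp (-a * x) * cos (c * x) = a / (a ^ 2 + c ^ 2) := by
  set z : ℂ := -a + c * Complex.I
  have hz : z.re < 0 := by simpa [z] using ha
  have hexp_re : ∀ x : ℝ, exp (-a * x) * cos (c * x) = (Complex.exp (z * x)).re := by
    intro x
    simp [z, Complex.exp_re]
  have hint_re := integral_re (integrableOn_exp_mul_complex_Ioi hz 0)
  simp only [RCLike.re_to_complex] at hint_re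
  simp_rw [hexp_re]
  rw [hint_re, integral_exp_mul_complex_Ioi hz]
  simp [z, Complex.div_re, Complex.normSq, sq]

/-- On `(-π/2, π/2)` this function is `arctan (k tan θ)` with `k = C / a`, by the subtraction
formula `arctan (k t) - arctan t = arctan ((k - 1) t / (1 + k t²))`; unlike `arctan (k tan θ)`,
it is smooth on all of `ℝ`. -/
lemma hasDerivAt_id_add_arctan_sin_mul_cos_div {a C : ℝ} (ha : 0 < a) (haC : a ≤ C) (θ : ℝ) :
    HasDerivAt (fun θ => θ + arctan ((C - a) * (sin θ * cos θ) / (a + (C - a) * sin θ ^ 2)))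
      (a * C / (a ^ 2 + (C ^ 2 - a ^ 2) * sin θ ^ 2)) θ := by
  have hD : 0 < a + (C - a) * sin θ ^ 2 := by
    have := mul_nonneg (sub_nonneg.2 haC) (sq_nonneg (sin θ))
    linarith
  have hQ : 0 < a ^ 2 + (C ^ 2 - a ^ 2) * sin θ ^ 2 := by
    have := mul_nonneg (sub_nonneg.2 (pow_le_pow_left₀ ha.le haC 2)) (sq_nonneg (sin θ))
    nlinarith
  have hnum : HasDerivAt (fun θ => (C - a) * (sin θ * cos θ))
      ((C - a) * (cos θ * cos θ - sin θ * sin θ)) θ := by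
    simpa [neg_mul, ← sub_eq_add_neg] using
      ((hasDerivAt_sin θ).mul (hasDerivAt_cos θ)).const_mul (C - a)
  have hden : HasDerivAt (fun θ => a + (C - a) * sin θ ^ 2)
      ((C - a) * (2 * sin θ * cos θ)) θ := by
    simpa [mul_assoc] using (((hasDerivAt_sin θ).pow 2).const_mul (C - a)).const_add a
  refine ((hasDerivAt_id θ).add ((hnum.div hden hD.ne').arctan)).congr_deriv ?_
  have hc : cos θ ^ 2 = 1 - sin θ ^ 2 := cos_sq' θ
  have hsq : 1 + ((C - a) * (sin θ * cos θ) / (a + (C - a) * sin θ ^ 2)) ^ 2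
      = (a ^ 2 + (C ^ 2 - a ^ 2) * sin θ ^ 2) / (a + (C - a) * sin θ ^ 2) ^ 2 := by
    field_simp
    linear_combination (C - a) ^ 2 * sin θ ^ 2 * hc
  have hquot : (C - a) * (cos θ * cos θ - sin θ * sin θ) * (a + (C - a) * sin θ ^ 2)
      - (C - a) * (sin θ * cos θ) * ((C - a) * (2 * sin θ * cos θ))
      = a * C - (a ^ 2 + (C ^ 2 - a ^ 2) * sin θ ^ 2) := by
    linear_combination (C - a) * (a - (C - a) * sin θ ^ 2) * hc
  simp only [Pi.div_apply, hsq]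
  rw [hquot, one_div_div, div_mul_div_cancel₀' (pow_ne_zero 2 hD.ne'), sub_div, div_self hQ.ne']
  ring

lemma integral_div_sq_add_sq_mul_sin_sq {a : ℝ} (ha : 0 < a) (b : ℝ) :
    ∫ θ in (0:ℝ)..π, a / (a ^ 2 + b ^ 2 * sin θ ^ 2) = π / √(a ^ 2 + b ^ 2) := by
  set C := √(a ^ 2 + b ^ 2)
  have hC2 : C ^ 2 = a ^ 2 + b ^ 2 := sq_sqrt (by positivity)
  have haC : a ≤ C := le_sqrt_of_sq_le (by nlinarith)
  have hC : 0 < C := ha.trans_le haC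
  have hderiv : ∀ θ, HasDerivAt
      (fun θ => (θ + arctan ((C - a) * (sin θ * cos θ) / (a + (C - a) * sin θ ^ 2))) / C)
      (a / (a ^ 2 + b ^ 2 * sin θ ^ 2)) θ := by
    intro θ
    refine ((hasDerivAt_id_add_arctan_sin_mul_cos_div ha haC θ).div_const C).congr_deriv ?_
    rw [hC2, add_sub_cancel_left, mul_div_right_comm, mul_div_cancel_right₀ _ hC.ne']
  have hcont : Continuous fun θ => a / (a ^ 2 + b ^ 2 * sin θ ^ 2) :=
    continuous_const.div (by fun_prop) fun θ => by positivity
  rw [intervalIntegral.integral_eq_sub_of_hasDerivAt (fun θ _ => hderiv θ)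
    (hcont.intervalIntegrable 0 π)]
  simp

lemma continuous_besselJ_zero : Continuous (besselJ 0) := by
  rw [funext besselJ_zero_eq_integral]
  exact continuous_const.mul
    (intervalIntegral.continuous_parametric_intervalIntegral_of_continuous' (by fun_prop) 0 π)

lemma abs_besselJ_zero_le_one (t : ℝ) : |besselJ 0 t| ≤ 1 := by
  have h := intervalIntegral.norm_integral_le_of_norm_le_const (a := 0) (b := π) (C := 1)
    (f := fun θ => cos (t * sin θ)) fun θ _ => abs_cos_le_one _
  rw [sub_zero, one_mul, abs_of_pos pi_pos, Real.norm_eq_abs] at h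
  rw [besselJ_zero_eq_integral, abs_mul, abs_inv, abs_of_pos pi_pos]
  exact inv_mul_le_one_of_le₀ h pi_pos.le

lemma integral_exp_neg_mul_mul_besselJ_zero {a : ℝ} (ha : 0 < a) (b : ℝ) :
    ∫ x in Ioi (0:ℝ), exp (-a * x) * besselJ 0 (b * x)
      = π⁻¹ * ∫ θ in (0:ℝ)..π, a / (a ^ 2 + b ^ 2 * sin θ ^ 2) := by
  have hprod : Integrable (Function.uncurry fun x θ => exp (-a * x) * cos (b * sin θ * x))
      ((volume.restrict (Ioi 0)).prod (volume.restrict (Ioc 0 π))) := by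
    have hexp := (exp_neg_integrableOn_Ioi 0 ha).mul_prod
      (integrableOn_const (μ := volume) (s := Ioc 0 π) (C := (1 : ℝ)) (by simp))
    have hcos : Continuous fun p : ℝ × ℝ => cos (b * sin p.2 * p.1) := by fun_prop
    refine (hexp.mul_bdd (c := 1) hcos.aestronglyMeasurable
      (.of_forall fun p => abs_cos_le_one _)).congr ?_
    exact .of_forall fun p => by simp only [mul_one, Function.uncurry_def]
  have hinner : ∀ x, exp (-a * x) * besselJ 0 (b * x)
      = π⁻¹ * ∫ θ in Ioc 0 π, exp (-a * x) * cos (b * sin θ * x) := by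
    intro x
    rw [besselJ_zero_eq_integral, intervalIntegral.integral_of_le pi_pos.le, mul_left_comm,
      ← integral_const_mul]
    simp only [mul_right_comm b, mul_assoc b]
  simp_rw [hinner, intervalIntegral.integral_of_le pi_pos.le]
  rw [integral_const_mul, integral_integral_swap hprod]
  simp_rw [integral_exp_neg_mul_mul_cos_Ioi ha, mul_pow]

theorem stmt13_general (a b : ℝ) (ha : 0 < a) :
    IntegrableOn (fun x : ℝ => Real.exp (-a * x) * besselJ 0 (b * x)) (Set.Ioi 0) ∧
    ∫ x in Set.Ioi (0:ℝ), Real.exp (-a * x) * besselJ 0 (b * x)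
      = 1 / Real.sqrt (a^2 + b^2) := by
  refine ⟨(exp_neg_integrableOn_Ioi 0 ha).mul_bdd (c := 1)
    (continuous_besselJ_zero.comp (continuous_const_mul b)).aestronglyMeasurable
    (.of_forall fun x => abs_besselJ_zero_le_one _), ?_⟩
  rw [integral_exp_neg_mul_mul_besselJ_zero ha, integral_div_sq_add_sq_mul_sin_sq ha,
    inv_mul_eq_div, div_div_cancel_left' pi_ne_zero, one_div]

theorem stmt13 (a b : ℝ) (ha : 0 < a) (hb : 0 < b) :
    IntegrableOn (fun x : ℝ => Real.exp (-a * x) * besselJ 0 (b * x)) (Set.Ioi 0) ∧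
    ∫ x in Set.Ioi (0:ℝ), Real.exp (-a * x) * besselJ 0 (b * x)
      = 1 / Real.sqrt (a^2 + b^2) :=
  stmt13_general a b ha
end
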